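/- (Per-iteration bound in the convex case.) Let d be a positive integer, η > 0, G ≥ 0, L > 0. Let f : ℝ^d → ℝ be convex, differentiable with L-Lipschitz gradient, and let x* ∈ ℝ^d. Let (Ω, ℱ, ℙ) be a probability space with a sub-σ-algebra ℱ_t, let x, e be ℱ_t-measurable square-integrable ℝ^d-valued random vectors, and g a square-integrable ℝ^d-valued random vector with E[g | ℱ_t] = ∇f(x) a.s. and E[‖g − ∇f(x)‖₂²] ≤ G². Set x̃ = x − e and x̃⁺ = x̃ − η g. Then E[⟨∇f(x), x − x*⟩] ≤ (1/(2η))·(E[‖x̃ − x*‖₂²] − E[‖x̃⁺ − x*‖₂²]) + (η G²)/2 + ((η + 1/(3L))/2)·E[‖∇f(x)‖₂²] + (3L/2)·E[‖e‖₂²]. -/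

import Mathlib

/-!
Write `y = x̃ - x⋆` and `a = ∇f(x)`. Both `y` and `y - η a` are `ℱₜ`-measurable, while `g - a` is
orthogonal in `L²` to every `ℱₜ`-measurable function, so
`E‖x̃⁺ - x⋆‖² = E‖y - η a‖² + η² E‖g - a‖²`, and the variance bound controls the last term.
What remains is pointwise: expanding `‖y - η a‖²` gives `⟨a, y⟩`, and `⟨a, x - x⋆⟩ = ⟨a, y⟩ + ⟨a, e⟩`
with `⟨a, e⟩ ≤ ‖a‖² / (6L) + (3L/2) ‖e‖²` by Young's inequality.
-/

open MeasureTheory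
open scoped RealInnerProductSpace

namespace MeasureTheory

variable {Ω E : Type*} {m m0 : MeasurableSpace Ω} {μ : Measure Ω}
  [NormedAddCommGroup E] [InnerProductSpace ℝ E]

theorem MemLp.integrable_inner {a b : Ω → E} (ha : MemLp a 2 μ) (hb : MemLp b 2 μ) :
    Integrable (fun ω => ⟪a ω, b ω⟫) μ :=
  (L2.integrable_inner (𝕜 := ℝ) (ha.toLp a) (hb.toLp b)).congr <| by
    filter_upwards [ha.coeFn_toLp, hb.coeFn_toLp] with ω hωa hωb
    rw [hωa, hωb]

variable [CompleteSpace E] [IsFiniteMeasure μ]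

theorem integral_inner_condExp_of_aestronglyMeasurable (hm : m ≤ m0) {f z : Ω → E}
    (hf : MemLp f 2 μ) (hz : MemLp z 2 μ) (hzm : AEStronglyMeasurable[m] z μ) :
    ∫ ω, ⟪z ω, μ[f|m] ω⟫ ∂μ = ∫ ω, ⟪z ω, f ω⟫ ∂μ := by
  have h := inner_condExpL2_eq_inner_fun (𝕜 := ℝ) hm (hf.toLp f) (hz.toLp z)
    (hzm.congr hz.coeFn_toLp.symm)
  rw [L2.inner_def, L2.inner_def] at h
  calc ∫ ω, ⟪z ω, μ[f|m] ω⟫ ∂μ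
      = ∫ ω, ⟪(condExpL2 E ℝ hm (hf.toLp f) : Ω →₂[μ] E) ω, hz.toLp z ω⟫ ∂μ := by
        refine integral_congr_ae ?_
        filter_upwards [hf.condExpL2_ae_eq_condExp (𝕜 := ℝ) hm, hz.coeFn_toLp] with ω h1 h2
        rw [h1, h2, real_inner_comm]
    _ = ∫ ω, ⟪hf.toLp f ω, hz.toLp z ω⟫ ∂μ := h
    _ = ∫ ω, ⟪z ω, f ω⟫ ∂μ := by
        refine integral_congr_ae ?_
        filter_upwards [hf.coeFn_toLp, hz.coeFn_toLp] with ω h1 h2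
        rw [h1, h2, real_inner_comm]

theorem integral_norm_sub_smul_sub_condExp_sq (hm : m ≤ m0) {g G z : Ω → E}
    (hg : MemLp g 2 μ) (hG : μ[g|m] =ᵐ[μ] G) (hz : MemLp z 2 μ)
    (hzm : AEStronglyMeasurable[m] z μ) (c : ℝ) :
    ∫ ω, ‖z ω - c • (g ω - G ω)‖ ^ 2 ∂μ
      = ∫ ω, ‖z ω‖ ^ 2 ∂μ + c ^ 2 * ∫ ω, ‖g ω - G ω‖ ^ 2 ∂μ := by
  have hGL2 : MemLp G 2 μ := (hg.condExp one_le_two).ae_eq hG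
  have hdL2 : MemLp (fun ω => g ω - G ω) 2 μ := hg.sub hGL2
  have horth : ∫ ω, ⟪z ω, g ω - G ω⟫ ∂μ = 0 := by
    have hzG : ∫ ω, ⟪z ω, G ω⟫ ∂μ = ∫ ω, ⟪z ω, g ω⟫ ∂μ := by
      rw [← integral_inner_condExp_of_aestronglyMeasurable hm hg hz hzm]
      exact integral_congr_ae (hG.mono fun ω hω => by simp only [hω])
    simp only [inner_sub_right]
    rw [integral_sub (hz.integrable_inner hg) (hz.integrable_inner hGL2), hzG, sub_self]
  have hpt : ∀ ω, ‖z ω - c • (g ω - G ω)‖ ^ 2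
      = ‖z ω‖ ^ 2 - 2 * c * ⟪z ω, g ω - G ω⟫ + c ^ 2 * ‖g ω - G ω‖ ^ 2 := fun ω => by
    rw [norm_sub_sq_real, real_inner_smul_right, norm_smul, mul_pow, Real.norm_eq_abs, sq_abs]
    ring
  have hz2 : Integrable (fun ω => ‖z ω‖ ^ 2) μ := hz.integrable_norm_pow two_ne_zero
  have hcross : Integrable (fun ω => 2 * c * ⟪z ω, g ω - G ω⟫) μ :=
    (hz.integrable_inner hdL2).const_mul _
  have hd2 : Integrable (fun ω => c ^ 2 * ‖g ω - G ω‖ ^ 2) μ :=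
    (hdL2.integrable_norm_pow two_ne_zero).const_mul _
  simp only [hpt]
  rw [integral_add ?_ hd2, integral_sub hz2 hcross, integral_const_mul, integral_const_mul, horth,
    mul_zero, sub_zero]
  exact hz2.sub hcross

end MeasureTheory

theorem real_inner_add_le_one_step_bound {F : Type*} [NormedAddCommGroup F]
    [InnerProductSpace ℝ F] (a y e : F) {η L : ℝ} (hη : 0 < η) (hL : 0 < L) :
    ⟪a, y + e⟫ ≤ 1 / (2 * η) * (‖y‖ ^ 2 - ‖y - η • a‖ ^ 2)
      + (η + 1 / (3 * L)) / 2 * ‖a‖ ^ 2 + 3 * L / 2 * ‖e‖ ^ 2 := by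
  have hstep : 1 / (2 * η) * (‖y‖ ^ 2 - ‖y - η • a‖ ^ 2) = ⟪a, y⟫ - η / 2 * ‖a‖ ^ 2 := by
    rw [norm_sub_sq_real, real_inner_smul_right, norm_smul, mul_pow, Real.norm_eq_abs, sq_abs,
      real_inner_comm]
    field_simp
    ring
  have hyoung : ⟪a, e⟫ ≤ 1 / (6 * L) * ‖a‖ ^ 2 + 3 * L / 2 * ‖e‖ ^ 2 := by
    have hsq : 0 ≤ 1 / (6 * L) * (‖a‖ - 3 * L * ‖e‖) ^ 2 := by positivity
    have hexp : 1 / (6 * L) * (‖a‖ - 3 * L * ‖e‖) ^ 2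
        = 1 / (6 * L) * ‖a‖ ^ 2 + 3 * L / 2 * ‖e‖ ^ 2 - ‖a‖ * ‖e‖ := by
      field_simp
      ring
    linarith [real_inner_le_norm a e]
  have hcoef : (η + 1 / (3 * L)) / 2 * ‖a‖ ^ 2 = η / 2 * ‖a‖ ^ 2 + 1 / (6 * L) * ‖a‖ ^ 2 := by
    field_simp
    ring
  rw [inner_add_right]
  linarith

theorem stmt15_general (d : ℕ)
    (η G L : ℝ) (hη : 0 < η) (hL : 0 < L)
    (f : EuclideanSpace ℝ (Fin d) → ℝ)
    (xstar : EuclideanSpace ℝ (Fin d))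
    {Ω : Type*} {m : MeasurableSpace Ω} (P : Measure Ω) [IsProbabilityMeasure P]
    (ℱt : MeasurableSpace Ω) (hℱt : ℱt ≤ m)
    (x e g : Ω → EuclideanSpace ℝ (Fin d))
    (hx : StronglyMeasurable[ℱt] x) (he : StronglyMeasurable[ℱt] e)
    (hxL2 : MemLp x 2 P) (heL2 : MemLp e 2 P) (hgL2 : MemLp g 2 P)
    (hcond : P[g|ℱt] =ᵐ[P] fun ω => gradient f (x ω))
    (hvar : ∫ ω, ‖g ω - gradient f (x ω)‖ ^ 2 ∂P ≤ G ^ 2) :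
    ∫ ω, (inner ℝ (gradient f (x ω)) (x ω - xstar) : ℝ) ∂P ≤
      1 / (2 * η) * ((∫ ω, ‖x ω - e ω - xstar‖ ^ 2 ∂P)
          - ∫ ω, ‖x ω - e ω - η • g ω - xstar‖ ^ 2 ∂P)
      + η * G ^ 2 / 2
      + (η + 1 / (3 * L)) / 2 * ∫ ω, ‖gradient f (x ω)‖ ^ 2 ∂P
      + 3 * L / 2 * ∫ ω, ‖e ω‖ ^ 2 ∂P := by
  set a : Ω → EuclideanSpace ℝ (Fin d) := fun ω => gradient f (x ω)
  set y : Ω → EuclideanSpace ℝ (Fin d) := fun ω => x ω - e ω - xstar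
  have haL2 : MemLp a 2 P := (hgL2.condExp one_le_two).ae_eq hcond
  have ham : AEStronglyMeasurable[ℱt] a P :=
    stronglyMeasurable_condExp.aestronglyMeasurable.congr hcond
  have hyL2 : MemLp y 2 P := (hxL2.sub heL2).sub (memLp_const xstar)
  have hym : AEStronglyMeasurable[ℱt] y P :=
    ((hx.sub he).sub stronglyMeasurable_const).aestronglyMeasurable
  have hzL2 : MemLp (fun ω => y ω - η • a ω) 2 P := hyL2.sub (haL2.const_smul η)
  have hpyth : ∫ ω, ‖x ω - e ω - η • g ω - xstar‖ ^ 2 ∂P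
      = ∫ ω, ‖y ω - η • a ω‖ ^ 2 ∂P + η ^ 2 * ∫ ω, ‖g ω - a ω‖ ^ 2 ∂P := by
    rw [← integral_norm_sub_smul_sub_condExp_sq hℱt hgL2 hcond hzL2 (hym.sub (ham.const_smul η))]
    congr with ω
    simp only [y, smul_sub]
    abel_nf
  have hnoise : 1 / (2 * η) * (η ^ 2 * ∫ ω, ‖g ω - a ω‖ ^ 2 ∂P) ≤ η * G ^ 2 / 2 := by
    rw [show 1 / (2 * η) * (η ^ 2 * ∫ ω, ‖g ω - a ω‖ ^ 2 ∂P)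
      = η / 2 * ∫ ω, ‖g ω - a ω‖ ^ 2 ∂P by field_simp]
    linarith [mul_le_mul_of_nonneg_left hvar (half_pos hη).le]
  have hy2 : Integrable (fun ω => ‖y ω‖ ^ 2) P := hyL2.integrable_norm_pow two_ne_zero
  have hz2 : Integrable (fun ω => ‖y ω - η • a ω‖ ^ 2) P := hzL2.integrable_norm_pow two_ne_zero
  have ha2 : Integrable (fun ω => ‖a ω‖ ^ 2) P := haL2.integrable_norm_pow two_ne_zero
  have he2 : Integrable (fun ω => ‖e ω‖ ^ 2) P := heL2.integrable_norm_pow two_ne_zero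
  have hyz2 := (hy2.sub hz2).const_mul (1 / (2 * η))
  calc ∫ ω, ⟪a ω, x ω - xstar⟫ ∂P
      ≤ ∫ ω, (1 / (2 * η) * (‖y ω‖ ^ 2 - ‖y ω - η • a ω‖ ^ 2)
          + (η + 1 / (3 * L)) / 2 * ‖a ω‖ ^ 2 + 3 * L / 2 * ‖e ω‖ ^ 2) ∂P := by
        refine integral_mono (haL2.integrable_inner (hxL2.sub (memLp_const xstar)))
          ((hyz2.add (ha2.const_mul _)).add (he2.const_mul _)) fun ω => ?_
        have hsplit : x ω - xstar = y ω + e ω := by simp only [y]; abel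
        simpa only [hsplit] using real_inner_add_le_one_step_bound (a ω) (y ω) (e ω) hη hL
    _ = 1 / (2 * η) * (∫ ω, ‖y ω‖ ^ 2 ∂P - ∫ ω, ‖y ω - η • a ω‖ ^ 2 ∂P)
          + (η + 1 / (3 * L)) / 2 * ∫ ω, ‖a ω‖ ^ 2 ∂P + 3 * L / 2 * ∫ ω, ‖e ω‖ ^ 2 ∂P := by
        rw [integral_add ?_ (he2.const_mul _), integral_add ?_ (ha2.const_mul _),
          integral_const_mul, integral_const_mul, integral_const_mul, integral_sub hy2 hz2]
        exacts [hyz2, hyz2.add (ha2.const_mul _)]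
    _ ≤ _ := by
        rw [hpyth]
        linarith

theorem stmt15 (d : ℕ) (hd : 0 < d)
    (η G L : ℝ) (hη : 0 < η) (hG : 0 ≤ G) (hL : 0 < L)
    (f : EuclideanSpace ℝ (Fin d) → ℝ) (hconv : ConvexOn ℝ Set.univ f)
    (hf : Differentiable ℝ f)
    (hlip : ∀ a b : EuclideanSpace ℝ (Fin d),
      ‖gradient f a - gradient f b‖ ≤ L * ‖a - b‖)
    (xstar : EuclideanSpace ℝ (Fin d))
    {Ω : Type*} {m : MeasurableSpace Ω} (P : Measure Ω) [IsProbabilityMeasure P]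
    (ℱt : MeasurableSpace Ω) (hℱt : ℱt ≤ m)
    (x e g : Ω → EuclideanSpace ℝ (Fin d))
    (hx : StronglyMeasurable[ℱt] x) (he : StronglyMeasurable[ℱt] e)
    (hxL2 : MemLp x 2 P) (heL2 : MemLp e 2 P) (hgL2 : MemLp g 2 P)
    (hcond : P[g|ℱt] =ᵐ[P] fun ω => gradient f (x ω))
    (hvar : ∫ ω, ‖g ω - gradient f (x ω)‖ ^ 2 ∂P ≤ G ^ 2) :
    ∫ ω, (inner ℝ (gradient f (x ω)) (x ω - xstar) : ℝ) ∂P ≤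
      1 / (2 * η) * ((∫ ω, ‖x ω - e ω - xstar‖ ^ 2 ∂P)
          - ∫ ω, ‖x ω - e ω - η • g ω - xstar‖ ^ 2 ∂P)
      + η * G ^ 2 / 2
      + (η + 1 / (3 * L)) / 2 * ∫ ω, ‖gradient f (x ω)‖ ^ 2 ∂P
      + 3 * L / 2 * ∫ ω, ‖e ω‖ ^ 2 ∂P :=
  stmt15_general d η G L hη hL f xstar P ℱt hℱt x e g hx he hxL2 heL2 hgL2 hcond hvar
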